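/- Let V be a finite-dimensional real inner product space, p ≥ 1, let φ be an alternating p-form on V of comass at most one, and let U ⊆ V be open. Then the following are equivalent: (1) for every compact set K ⊆ U the (U,φ)-convex hull K̂ is compact, and there exist a compact set C ⊆ U and a smooth function on U ∖ C that is strictly φ-plurisubharmonic at every point of U ∖ C; (2) there exist a smooth φ-plurisubharmonic proper exhaustion function f : U → ℝ and a compact set C′ ⊆ U such that f is strictly φ-plurisubharmonic at every point of U ∖ C′. (U is then called strictly φ-convex at infinity.) -/

import Mathlib

/-!
In Euclidean space `‖x‖²` is strictly `φ`-plurisubharmonic everywhere: its Hessian trace on a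
`φ`-plane is `2p`.

If hulls of compacts are compact, there are compacts `Kₙ` exhausting `U` with
`hull(Kₙ) ⊆ int Kₙ₊₁`. The shell `Kₙ₊₂ \ int Kₙ₊₁` is then disjoint from `hull(Kₙ)`: each of its
points has a psh function exceeding its supremum over `Kₙ` there, and composing with a convex
nondecreasing cutoff and summing over a finite subcover gives a nonnegative psh `Tₙ` vanishing on
`Kₙ` and at least `n` on the shell. The locally finite sum `‖x‖² + ∑ Tₙ` is the exhaustion.

Conversely, the hull of `K` lies in the compact sublevel set `{f ≤ sup_K f}` of an exhaustion `f`
and is closed in it.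
-/

open scoped RealInnerProductSpace

/-- `f` is smooth and `φ`-plurisubharmonic on the open set `U`: the trace of its Hessian on
every `φ`-plane is nonnegative at every point of `U`. -/
def PshOn {V : Type*} [NormedAddCommGroup V] [InnerProductSpace ℝ V]
    {p : ℕ} (φ : V [⋀^Fin p]→ₗ[ℝ] ℝ) (U : Set V) (f : V → ℝ) : Prop :=
  ContDiffOn ℝ (⊤ : ℕ∞) f U ∧
  ∀ x ∈ U, ∀ e : Fin p → V, Orthonormal ℝ e → φ e = 1 →
    0 ≤ ∑ j, fderiv ℝ (fderiv ℝ f) x (e j) (e j)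

/-- `f` is strictly `φ`-plurisubharmonic at `x`. -/
def StrictAt {V : Type*} [NormedAddCommGroup V] [InnerProductSpace ℝ V]
    {p : ℕ} (φ : V [⋀^Fin p]→ₗ[ℝ] ℝ) (f : V → ℝ) (x : V) : Prop :=
  ∀ e : Fin p → V, Orthonormal ℝ e → φ e = 1 →
    0 < ∑ j, fderiv ℝ (fderiv ℝ f) x (e j) (e j)

/-- The `(U,φ)`-convex hull of a compact subset `K` of `U`. -/
def PshHull {V : Type*} [NormedAddCommGroup V] [InnerProductSpace ℝ V]
    {p : ℕ} (φ : V [⋀^Fin p]→ₗ[ℝ] ℝ) (U : Set V) (K : Set V) : Set V :=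
  {x ∈ U | ∀ f : V → ℝ, PshOn φ U f → f x ≤ sSup (f '' K)}

open Filter Topology Set

section Hessian

variable {E : Type*} [NormedAddCommGroup E] [NormedSpace ℝ E] {f g : E → ℝ} {x : E}

lemma ContDiffAt.eventually_differentiableAt_of_two (hf : ContDiffAt ℝ 2 f x) :
    ∀ᶠ y in 𝓝 x, DifferentiableAt ℝ f y :=
  (hf.eventually (by simp)).mono fun _ hy => hy.differentiableAt (by simp)

lemma ContDiffAt.differentiableAt_fderiv_of_two (hf : ContDiffAt ℝ 2 f x) :
    DifferentiableAt ℝ (fderiv ℝ f) x :=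
  (hf.fderiv_right (m := 1) le_rfl).differentiableAt one_ne_zero

lemma fderiv_fderiv_add (hf : ContDiffAt ℝ 2 f x) (hg : ContDiffAt ℝ 2 g x) :
    fderiv ℝ (fderiv ℝ (f + g)) x = fderiv ℝ (fderiv ℝ f) x + fderiv ℝ (fderiv ℝ g) x := by
  have h : fderiv ℝ (f + g) =ᶠ[𝓝 x] fderiv ℝ f + fderiv ℝ g :=
    (hf.eventually_differentiableAt_of_two.and hg.eventually_differentiableAt_of_two).mono
      fun _ hy => fderiv_add hy.1 hy.2
  rw [h.fderiv_eq, fderiv_add hf.differentiableAt_fderiv_of_two hg.differentiableAt_fderiv_of_two]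

lemma fderiv_fderiv_comp_apply {χ : ℝ → ℝ} (hχ : ContDiff ℝ 2 χ) (hf : ContDiffAt ℝ 2 f x)
    (e : E) :
    fderiv ℝ (fderiv ℝ (χ ∘ f)) x e e =
      deriv (deriv χ) (f x) * fderiv ℝ f x e ^ 2 + deriv χ (f x) * fderiv ℝ (fderiv ℝ f) x e e := by
  have hχ' : ContDiff ℝ 1 (deriv χ) := hχ.deriv'
  have h : fderiv ℝ (χ ∘ f) =ᶠ[𝓝 x] fun y => deriv χ (f y) • fderiv ℝ f y :=
    hf.eventually_differentiableAt_of_two.mono fun y hy =>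
      ((hχ.differentiable (by simp) (f y)).hasDerivAt.comp_hasFDerivAt y hy.hasFDerivAt).fderiv
  have hdχ : HasFDerivAt (fun y => deriv χ (f y)) (deriv (deriv χ) (f x) • fderiv ℝ f x) x :=
    (hχ'.differentiable one_ne_zero (f x)).hasDerivAt.comp_hasFDerivAt x
      (hf.differentiableAt (by simp)).hasFDerivAt
  rw [((hdχ.smul hf.differentiableAt_fderiv_of_two.hasFDerivAt).congr_of_eventuallyEq h).fderiv]
  simp only [add_apply, smul_apply, ContinuousLinearMap.smulRight_apply, smul_eq_mul]
  ring

end Hessian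

lemma fderiv_fderiv_norm_sq_apply {V : Type*} [NormedAddCommGroup V] [InnerProductSpace ℝ V]
    (x e : V) : fderiv ℝ (fderiv ℝ fun y : V => ‖y‖ ^ 2) x e e = 2 * ‖e‖ ^ 2 := by
  have h : fderiv ℝ (fun y : V => ‖y‖ ^ 2) = ⇑((2 : ℝ) • innerSL ℝ (E := V)) := by
    ext y; simp [fderiv_norm_sq_apply]
  rw [h, ContinuousLinearMap.fderiv, ← real_inner_self_eq_norm_sq]
  rfl

section PshOn

variable {V : Type*} [NormedAddCommGroup V] [InnerProductSpace ℝ V] {p : ℕ}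
  {φ : V [⋀^Fin p]→ₗ[ℝ] ℝ} {U : Set V} {f g : V → ℝ} {x : V}

lemma ContDiffOn.contDiffAt_two (hU : IsOpen U) (hf : ContDiffOn ℝ (⊤ : ℕ∞) f U) (hx : x ∈ U) :
    ContDiffAt ℝ 2 f x :=
  (hf.contDiffAt (hU.mem_nhds hx)).of_le (WithTop.coe_le_coe.2 le_top)

lemma PshOn.add (hU : IsOpen U) (hf : PshOn φ U f) (hg : PshOn φ U g) : PshOn φ U (f + g) := by
  refine ⟨hf.1.add hg.1, fun x hx e he hφ => ?_⟩
  simp only [fderiv_fderiv_add (hf.1.contDiffAt_two hU hx) (hg.1.contDiffAt_two hU hx),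
    add_apply, Finset.sum_add_distrib]
  exact add_nonneg (hf.2 x hx e he hφ) (hg.2 x hx e he hφ)

lemma pshOn_zero : PshOn φ U 0 :=
  ⟨contDiffOn_const, fun x _ e _ _ => by simp⟩

lemma PshOn.sum {ι : Type*} (hU : IsOpen U) {s : Finset ι} {g : ι → V → ℝ}
    (hg : ∀ i ∈ s, PshOn φ U (g i)) : PshOn φ U (∑ i ∈ s, g i) :=
  Finset.sum_induction g (PshOn φ U) (fun _ _ => PshOn.add hU) pshOn_zero hg

lemma PshOn.const_smul {a : ℝ} (ha : 0 ≤ a) (hf : PshOn φ U f) : PshOn φ U (a • f) := by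
  refine ⟨hf.1.const_smul a, fun x hx e he hφ => ?_⟩
  rw [fderiv_const_smul_field, fderiv_const_smul_field (f := fderiv ℝ f)]
  exact (mul_nonneg ha (hf.2 x hx e he hφ)).trans_eq (Finset.mul_sum ..)

lemma PshOn.sub_const (hf : PshOn φ U f) (c : ℝ) : PshOn φ U (fun y => f y - c) := by
  refine ⟨hf.1.sub contDiffOn_const, fun x hx e he hφ => ?_⟩
  have h : fderiv ℝ (fun y => f y - c) = fderiv ℝ f := funext fun _ => fderiv_sub_const c
  simpa only [h] using hf.2 x hx e he hφ

lemma PshOn.comp (hU : IsOpen U) {χ : ℝ → ℝ} (hχ : ContDiff ℝ (⊤ : ℕ∞) χ)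
    (hχ' : ∀ t, 0 ≤ deriv χ t) (hχ'' : ∀ t, 0 ≤ deriv (deriv χ) t) (hf : PshOn φ U f) :
    PshOn φ U (χ ∘ f) := by
  refine ⟨hχ.comp_contDiffOn hf.1, fun x hx e he hφ => ?_⟩
  simp only [fderiv_fderiv_comp_apply (hχ.of_le (WithTop.coe_le_coe.2 le_top))
    (hf.1.contDiffAt_two hU hx), Finset.sum_add_distrib, ← Finset.mul_sum]
  exact add_nonneg (mul_nonneg (hχ'' _) (Finset.sum_nonneg fun j _ => sq_nonneg _))
    (mul_nonneg (hχ' _) (hf.2 x hx e he hφ))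

lemma PshOn.of_eventuallyEq (hU : IsOpen U) (h : ∀ x ∈ U, ∃ g, PshOn φ U g ∧ f =ᶠ[𝓝 x] g) :
    PshOn φ U f := by
  refine ⟨fun x hx => ?_, fun x hx e he hφ => ?_⟩ <;> obtain ⟨g, hg, hfg⟩ := h x hx
  · exact ((hg.1.contDiffAt (hU.mem_nhds hx)).congr_of_eventuallyEq hfg).contDiffWithinAt
  · simpa only [hfg.fderiv.fderiv_eq] using hg.2 x hx e he hφ

lemma PshOn.tsum (hU : IsOpen U) {T : ℕ → V → ℝ} (hT : ∀ n, PshOn φ U (T n))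
    (hT_loc : ∀ x ∈ U, ∃ m, ∀ᶠ y in 𝓝 x, ∀ n, m ≤ n → T n y = 0) :
    PshOn φ U (fun y => ∑' n, T n y) := by
  refine .of_eventuallyEq hU fun x hx => ?_
  obtain ⟨m, hm⟩ := hT_loc x hx
  refine ⟨∑ n ∈ Finset.range m, T n, .sum hU fun n _ => hT n, hm.mono fun y hy => ?_⟩
  rw [Finset.sum_apply]
  exact tsum_eq_sum fun n hn => hy n (by simpa using hn)

lemma pshOn_norm_sq : PshOn φ U (fun y => ‖y‖ ^ 2) :=
  ⟨(contDiff_norm_sq ℝ).contDiffOn, fun x _ e _ _ => by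
    simp only [fderiv_fderiv_norm_sq_apply]; positivity⟩

lemma strictAt_norm_sq_add (hp : 0 < p) (hU : IsOpen U) (hg : PshOn φ U g) (hx : x ∈ U) :
    StrictAt φ ((fun y => ‖y‖ ^ 2) + g) x := by
  intro e he hφ
  simp only [fderiv_fderiv_add ((contDiff_norm_sq ℝ).contDiffAt) (hg.1.contDiffAt_two hU hx),
    add_apply, Finset.sum_add_distrib, fderiv_fderiv_norm_sq_apply,
    he.1, one_pow, mul_one, Finset.sum_const, Finset.card_univ, Fintype.card_fin, nsmul_eq_mul]
  have := hg.2 x hx e he hφ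
  positivity

end PshOn

section Cutoff

open intervalIntegral

structure IsSmoothOnset (g : ℝ → ℝ) : Prop where
  contDiff : ContDiff ℝ (⊤ : ℕ∞) g
  eq_zero : ∀ t ≤ 0, g t = 0
  pos : ∀ t, 0 < t → 0 < g t

lemma isSmoothOnset_expNegInvGlue : IsSmoothOnset expNegInvGlue :=
  ⟨expNegInvGlue.contDiff, fun _ => expNegInvGlue.zero_of_nonpos,
    fun _ => expNegInvGlue.pos_of_pos⟩

namespace IsSmoothOnset

variable {g : ℝ → ℝ}

lemma nonneg (hg : IsSmoothOnset g) (t : ℝ) : 0 ≤ g t := by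
  rcases le_or_gt t 0 with ht | ht
  · exact (hg.eq_zero t ht).ge
  · exact (hg.pos t ht).le

lemma deriv_primitive (hg : IsSmoothOnset g) : deriv (fun t => ∫ s in (0 : ℝ)..t, g s) = g :=
  funext (hg.contDiff.continuous.deriv_integral g 0)

lemma primitive (hg : IsSmoothOnset g) : IsSmoothOnset fun t => ∫ s in (0 : ℝ)..t, g s := by
  refine ⟨contDiff_infty_iff_deriv.2 ⟨fun t => ?_, ?_⟩, fun t ht => ?_, fun t ht => ?_⟩
  · exact (hg.contDiff.continuous.integral_hasStrictDerivAt 0 t).hasDerivAt.differentiableAt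
  · rw [hg.deriv_primitive]; exact hg.contDiff
  · refine (integral_congr (g := 0) fun s hs => hg.eq_zero s ?_).trans (by simp)
    rcases mem_uIcc.1 hs with h | h <;> linarith [h.1, h.2]
  · exact intervalIntegral_pos_of_pos_on (hg.contDiff.continuous.intervalIntegrable _ _)
      (fun s hs => hg.pos s hs.1) ht

end IsSmoothOnset

noncomputable def convexCutoff : ℝ → ℝ :=
  fun t => ∫ s in (0 : ℝ)..t, ∫ r in (0 : ℝ)..s, expNegInvGlue r

lemma isSmoothOnset_convexCutoff : IsSmoothOnset convexCutoff :=
  isSmoothOnset_expNegInvGlue.primitive.primitive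

lemma deriv_convexCutoff_nonneg (t : ℝ) : 0 ≤ deriv convexCutoff t := by
  unfold convexCutoff
  rw [isSmoothOnset_expNegInvGlue.primitive.deriv_primitive]
  exact isSmoothOnset_expNegInvGlue.primitive.nonneg t

lemma deriv_deriv_convexCutoff_nonneg (t : ℝ) : 0 ≤ deriv (deriv convexCutoff) t := by
  unfold convexCutoff
  rw [isSmoothOnset_expNegInvGlue.primitive.deriv_primitive,
    isSmoothOnset_expNegInvGlue.deriv_primitive]
  exact expNegInvGlue.nonneg t

end Cutoff

section PshHull

variable {V : Type*} [NormedAddCommGroup V] [InnerProductSpace ℝ V] {p : ℕ}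
  {φ : V [⋀^Fin p]→ₗ[ℝ] ℝ} {U K : Set V}

lemma subset_pshHull (hK : IsCompact K) (hKU : K ⊆ U) : K ⊆ PshHull φ U K := fun _ hx =>
  ⟨hKU hx, fun f hf =>
    le_csSup (hK.bddAbove_image (hf.1.continuousOn.mono hKU)) (mem_image_of_mem f hx)⟩

lemma isCompact_pshHull_of_subset {S : Set V} (hS : IsCompact S) (hSU : S ⊆ U)
    (hKS : PshHull φ U K ⊆ S) : IsCompact (PshHull φ U K) := by
  have h : PshHull φ U K = S ∩ ⋂ f : {f // PshOn φ U f}, S ∩ f.1 ⁻¹' Iic (sSup (f.1 '' K)) := by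
    ext x
    simp only [mem_inter_iff, mem_iInter, mem_preimage, mem_Iic, Subtype.forall]
    exact ⟨fun hx => ⟨hKS hx, fun f hf => ⟨hKS hx, hx.2 f hf⟩⟩,
      fun hx => ⟨hSU hx.1, fun f hf => (hx.2 f hf).2⟩⟩
  rw [h]
  exact hS.inter_right (isClosed_iInter fun f =>
    (f.2.1.mono hSU).continuousOn.preimage_isClosed_of_isClosed hS.isClosed isClosed_Iic)

lemma exists_pshOn_nonneg_of_notMem_pshHull (hU : IsOpen U) (hK : IsCompact K) (hKU : K ⊆ U)
    {x : V} (hx : x ∈ U) (hxK : x ∉ PshHull φ U K) (c : ℝ) :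
    ∃ w, PshOn φ U w ∧ (∀ y, 0 ≤ w y) ∧ (∀ y ∈ K, w y = 0) ∧ c < w x := by
  obtain ⟨f, hf, hfx⟩ : ∃ f, PshOn φ U f ∧ sSup (f '' K) < f x := by
    simpa [PshHull, hx] using hxK
  set w₀ := convexCutoff ∘ fun y => f y - sSup (f '' K)
  have hw₀x : 0 < w₀ x := isSmoothOnset_convexCutoff.pos _ (sub_pos.2 hfx)
  refine ⟨((|c| + 1) / w₀ x) • w₀, .const_smul (by positivity) ((hf.sub_const _).comp hU
    isSmoothOnset_convexCutoff.contDiff deriv_convexCutoff_nonneg deriv_deriv_convexCutoff_nonneg),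
    fun y => ?_, fun y hy => ?_, ?_⟩
  · exact mul_nonneg (by positivity) (isSmoothOnset_convexCutoff.nonneg _)
  · simp [w₀, isSmoothOnset_convexCutoff.eq_zero _
      (sub_nonpos.2 ((subset_pshHull hK hKU hy).2 f hf))]
  · simp only [Pi.smul_apply, smul_eq_mul, div_mul_cancel₀ _ hw₀x.ne']
    linarith [le_abs_self c]

lemma exists_pshOn_nonneg_le_of_disjoint_pshHull (hU : IsOpen U) (hK : IsCompact K)
    (hKU : K ⊆ U) {A : Set V} (hA : IsCompact A) (hAU : A ⊆ U)
    (hAK : Disjoint A (PshHull φ U K)) (c : ℝ) :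
    ∃ T, PshOn φ U T ∧ (∀ y, 0 ≤ T y) ∧ (∀ y ∈ K, T y = 0) ∧ ∀ y ∈ A, c ≤ T y := by
  choose! w hw using fun a (ha : a ∈ A) => exists_pshOn_nonneg_of_notMem_pshHull hU hK hKU
    (hAU ha) (disjoint_left.1 hAK ha) c
  obtain ⟨s, hsA, hAs⟩ := hA.elim_nhds_subcover (fun a => U ∩ w a ⁻¹' Ioi c) fun a ha =>
    ((hw a ha).1.1.continuousOn.isOpen_inter_preimage hU isOpen_Ioi).mem_nhds
      ⟨hAU ha, (hw a ha).2.2.2⟩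
  refine ⟨∑ a ∈ s, w a, .sum hU fun a ha => (hw a (hsA a ha)).1, fun y => ?_, fun y hy => ?_,
    fun y hy => ?_⟩ <;> rw [Finset.sum_apply]
  · exact Finset.sum_nonneg fun a ha => (hw a (hsA a ha)).2.1 y
  · exact Finset.sum_eq_zero fun a ha => (hw a (hsA a ha)).2.2.1 y hy
  · obtain ⟨a, ha, hya⟩ := mem_iUnion₂.1 (hAs hy)
    exact hya.2.le.trans
      (Finset.single_le_sum (fun b hb => (hw b (hsA b hb)).2.1 y) ha)

end PshHull

lemma Monotone.exists_mem_succ_diff {α : Type*} {s : ℕ → Set α} (hs : Monotone s) {x : α}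
    {N m : ℕ} (hxN : x ∈ s N) (hxm : x ∉ s m) : ∃ n, m ≤ n ∧ x ∈ s (n + 1) \ s n := by
  classical
  have hex : ∃ n, x ∈ s n := ⟨N, hxN⟩
  have hm : m < Nat.find hex := lt_of_not_ge fun h => hxm (hs h (Nat.find_spec hex))
  obtain ⟨n, hn⟩ : ∃ n, Nat.find hex = n + 1 := Nat.exists_eq_add_one.2 (by omega)
  exact ⟨n, by omega, hn ▸ Nat.find_spec hex, Nat.find_min hex (by omega)⟩

structure PshExhaustion {V : Type*} [NormedAddCommGroup V] [InnerProductSpace ℝ V] {p : ℕ}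
    (φ : V [⋀^Fin p]→ₗ[ℝ] ℝ) (U : Set V) where
  set : ℕ → Set V
  isCompact : ∀ n, IsCompact (set n)
  subset : ∀ n, set n ⊆ U
  pshHull_subset_interior : ∀ n, PshHull φ U (set n) ⊆ interior (set (n + 1))
  exists_mem : ∀ x ∈ U, ∃ n, x ∈ set n

namespace PshExhaustion

variable {V : Type*} [NormedAddCommGroup V] [InnerProductSpace ℝ V] {p : ℕ}
  {φ : V [⋀^Fin p]→ₗ[ℝ] ℝ} {U : Set V}

lemma subset_interior_succ (K : PshExhaustion φ U) (n : ℕ) : K.set n ⊆ interior (K.set (n + 1)) :=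
  (subset_pshHull (K.isCompact n) (K.subset n)).trans (K.pshHull_subset_interior n)

lemma monotone (K : PshExhaustion φ U) : Monotone K.set :=
  monotone_nat_of_le_succ fun n => (K.subset_interior_succ n).trans interior_subset

lemma exists_mem_interior (K : PshExhaustion φ U) {x : V} (hx : x ∈ U) :
    ∃ n, x ∈ interior (K.set n) :=
  let ⟨n, hn⟩ := K.exists_mem x hx
  ⟨n + 1, K.subset_interior_succ n hn⟩

lemma isCompact_sublevel (K : PshExhaustion φ U) {f : V → ℝ} (hf : ContinuousOn f U)
    (hf_shell : ∀ n : ℕ, ∀ y ∈ K.set (n + 2) \ K.set (n + 1), (n : ℝ) ≤ f y) (c : ℝ) :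
    IsCompact {x ∈ U | f x ≤ c} := by
  obtain ⟨m, hm⟩ := exists_nat_gt c
  have h : {x ∈ U | f x ≤ c} = K.set (m + 1) ∩ f ⁻¹' Iic c := by
    ext x
    refine ⟨fun hx => ⟨?_, hx.2⟩, fun hx => ⟨K.subset _ hx.1, hx.2⟩⟩
    by_contra hxm
    obtain ⟨N, hN⟩ := K.exists_mem x hx.1
    obtain ⟨n, hmn, hn⟩ := K.monotone.exists_mem_succ_diff hN hxm
    obtain ⟨k, rfl⟩ : ∃ k, n = k + 1 := ⟨n - 1, by omega⟩
    have hmk : (m : ℝ) ≤ k := by exact_mod_cast (by omega : m ≤ k)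
    linarith [hf_shell k x hn, hx.2]
  rw [h]
  exact (K.isCompact _).of_isClosed_subset ((hf.mono (K.subset _)).preimage_isClosed_of_isClosed
    (K.isCompact _).isClosed isClosed_Iic) inter_subset_left

lemma exists_pshOn_bump (K : PshExhaustion φ U) (hU : IsOpen U) (n : ℕ) :
    ∃ T, PshOn φ U T ∧ (∀ y, 0 ≤ T y) ∧ (∀ y ∈ K.set n, T y = 0) ∧
      ∀ y ∈ K.set (n + 2) \ K.set (n + 1), (n : ℝ) ≤ T y := by
  obtain ⟨T, hT, hT_nonneg, hT_zero, hT_shell⟩ := exists_pshOn_nonneg_le_of_disjoint_pshHull hU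
    (K.isCompact n) (K.subset n) ((K.isCompact (n + 2)).diff isOpen_interior)
    (sdiff_subset.trans (K.subset _))
    (disjoint_sdiff_left.mono_right (K.pshHull_subset_interior n)) n
  exact ⟨T, hT, hT_nonneg, hT_zero,
    fun y hy => hT_shell y (sdiff_subset_sdiff_right interior_subset hy)⟩

lemma exists_pshOn_strictAt_isCompact_sublevel (K : PshExhaustion φ U) (hp : 0 < p)
    (hU : IsOpen U) :
    ∃ f, PshOn φ U f ∧ (∀ c : ℝ, IsCompact {x ∈ U | f x ≤ c}) ∧ ∀ x ∈ U, StrictAt φ f x := by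
  choose T hT hT_nonneg hT_zero hT_shell using K.exists_pshOn_bump hU
  have hT_loc (x : V) (hx : x ∈ U) : ∃ m, ∀ᶠ y in 𝓝 x, ∀ n, m ≤ n → T n y = 0 :=
    (K.exists_mem_interior hx).imp fun m hm => eventually_of_mem (isOpen_interior.mem_nhds hm)
      fun y hy n hmn => hT_zero n y (K.monotone hmn (interior_subset hy))
  have hS : PshOn φ U (fun y => ∑' n, T n y) := .tsum hU hT hT_loc
  have hf := pshOn_norm_sq.add hU hS
  refine ⟨_, hf, K.isCompact_sublevel hf.1.continuousOn fun n y hy => ?_,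
    fun x hx => strictAt_norm_sq_add hp hU hS hx⟩
  obtain ⟨m, hm⟩ := hT_loc y (K.subset _ hy.1)
  have hsum : Summable fun n => T n y :=
    summable_of_ne_finset_zero (s := Finset.range m) fun k hk =>
      hm.self_of_nhds k (by simpa using hk)
  calc (n : ℝ) ≤ T n y := hT_shell n y hy
    _ ≤ ∑' k, T k y := hsum.le_tsum n fun k _ => hT_nonneg k y
    _ ≤ ‖y‖ ^ 2 + ∑' k, T k y := le_add_of_nonneg_left (by positivity)

end PshExhaustion

lemma nonempty_pshExhaustion {V : Type*} [NormedAddCommGroup V] [InnerProductSpace ℝ V]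
    [FiniteDimensional ℝ V] {p : ℕ} {φ : V [⋀^Fin p]→ₗ[ℝ] ℝ} {U : Set V} (hU : IsOpen U)
    (hhull : ∀ K, K ⊆ U → IsCompact K → IsCompact (PshHull φ U K)) :
    Nonempty (PshExhaustion φ U) := by
  obtain ⟨E, hE, hEU⟩ : IsSigmaCompact U :=
    have := hU.locallyCompactSpace
    isSigmaCompact_iff_sigmaCompactSpace.2 inferInstance
  have step (n : ℕ) (D : {D : Set V // IsCompact D ∧ D ⊆ U}) :
      ∃ D' : {D : Set V // IsCompact D ∧ D ⊆ U}, PshHull φ U D ∪ E n ⊆ interior D' := by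
    obtain ⟨L, hL, hDL, hLU⟩ := exists_compact_between ((hhull D D.2.2 D.2.1).union (hE n)) hU
      (union_subset (fun _ hx => hx.1) (hEU ▸ subset_iUnion E n))
    exact ⟨⟨L, hL, hLU⟩, hDL⟩
  choose next hnext using step
  let C (n : ℕ) : {D : Set V // IsCompact D ∧ D ⊆ U} :=
    Nat.rec ⟨∅, isCompact_empty, empty_subset U⟩ next n
  have hC (n : ℕ) : PshHull φ U (C n).1 ∪ E n ⊆ interior (C (n + 1)).1 := hnext n (C n)
  refine ⟨⟨fun n => (C n).1, fun n => (C n).2.1, fun n => (C n).2.2,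
    fun n _ hx => hC n (Or.inl hx), fun x hx => ?_⟩⟩
  obtain ⟨n, hn⟩ := mem_iUnion.1 (hEU.symm ▸ hx)
  exact ⟨n + 1, interior_subset (hC n (Or.inr hn))⟩

theorem strictlyPhiConvexAtInfinity_iff_general
    {V : Type*} [NormedAddCommGroup V] [InnerProductSpace ℝ V]
    [FiniteDimensional ℝ V] {p : ℕ} (hp : 1 ≤ p)
    (φ : V [⋀^Fin p]→ₗ[ℝ] ℝ)
    (U : Set V) (hU : IsOpen U) :
    ((∀ K : Set V, K ⊆ U → IsCompact K → IsCompact (PshHull φ U K)) ∧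
      ∃ C : Set V, IsCompact C ∧ C ⊆ U ∧
        ∃ g : V → ℝ, ContDiffOn ℝ (⊤ : ℕ∞) g (U \ C) ∧ ∀ x ∈ U \ C, StrictAt φ g x) ↔
      ∃ f : V → ℝ, PshOn φ U f ∧ (∀ c : ℝ, IsCompact {x ∈ U | f x ≤ c}) ∧
        ∃ C' : Set V, IsCompact C' ∧ C' ⊆ U ∧ ∀ x ∈ U \ C', StrictAt φ f x := by
  constructor
  · rintro ⟨hhull, -⟩
    obtain ⟨K⟩ := nonempty_pshExhaustion hU hhull
    obtain ⟨f, hf, hf_proper, hf_strict⟩ := K.exists_pshOn_strictAt_isCompact_sublevel hp hU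
    exact ⟨f, hf, hf_proper, ∅, isCompact_empty, empty_subset U, fun x hx => hf_strict x hx.1⟩
  · rintro ⟨f, hf, hf_proper, C', hC', hC'U, hf_strict⟩
    refine ⟨fun K _ _ => ?_, C', hC', hC'U, f, hf.1.mono sdiff_subset, hf_strict⟩
    exact isCompact_pshHull_of_subset (hf_proper (sSup (f '' K))) (fun _ hx => hx.1)
      fun x hx => ⟨hx.1, hx.2 f hf⟩

/-- **Theorem 3.8** (Harvey–Lawson), Euclidean parallel case.  `U` is strictly `φ`-convex at
infinity (hulls of compacts are compact and there is a function strictly `φ`-plurisubharmonic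
outside a compact subset) iff there exists a smooth `φ`-plurisubharmonic proper exhaustion
function which is strictly `φ`-plurisubharmonic outside a compact subset. -/
theorem strictlyPhiConvexAtInfinity_iff
    {V : Type*} [NormedAddCommGroup V] [InnerProductSpace ℝ V]
    [FiniteDimensional ℝ V] {p : ℕ} (hp : 1 ≤ p)
    (φ : V [⋀^Fin p]→ₗ[ℝ] ℝ)
    (hcomass : ∀ u : Fin p → V, Orthonormal ℝ u → φ u ≤ 1)
    (U : Set V) (hU : IsOpen U) :
    ((∀ K : Set V, K ⊆ U → IsCompact K → IsCompact (PshHull φ U K)) ∧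
      ∃ C : Set V, IsCompact C ∧ C ⊆ U ∧
        ∃ g : V → ℝ, ContDiffOn ℝ (⊤ : ℕ∞) g (U \ C) ∧ ∀ x ∈ U \ C, StrictAt φ g x) ↔
      ∃ f : V → ℝ, PshOn φ U f ∧ (∀ c : ℝ, IsCompact {x ∈ U | f x ≤ c}) ∧
        ∃ C' : Set V, IsCompact C' ∧ C' ⊆ U ∧ ∀ x ∈ U \ C', StrictAt φ f x :=
  strictlyPhiConvexAtInfinity_iff_general hp φ U hU
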